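/- arXiv:2404.07823 — 2 statements merged into one kernel-verified Lean document; each statement's English description precedes it below -/
import Mathlib

section
/- For a complete deterministic timed automaton A, if two valid clocked words γ and γ' have the same region word (⟦γ⟧ = ⟦γ'⟧), then they traverse the same sequence of transitions of A; hence γ is accepted iff γ' is accepted, and the sequences of reset information along their runs are equal. -/
open scoped NNReal

/-- A transition of a timed automaton: source location, action, guard (a predicate on
clock valuations), reset set, and target location. -/
structure TimedTransition (Act Loc Clock : Type*) where
  src : Loc
  act : Act
  guard : (Clock → ℝ≥0) → Prop
  resets : Set Clock
  tgt : Loc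

/-- A timed automaton: initial location, accepting locations, and a set of transitions. -/
structure TimedAutomaton (Act Loc Clock : Type*) where
  init : Loc
  accept : Set Loc
  trans : Set (TimedTransition Act Loc Clock)

open Classical in
/-- Reset the clocks in `B` to `0` and leave the other clocks unchanged. -/
noncomputable def resetVal {Clock : Type*} (B : Set Clock) (ν : Clock → ℝ≥0) :
    Clock → ℝ≥0 :=
  fun c => if c ∈ B then 0 else ν c

/-- A timed automaton is deterministic iff guards of any two distinct transitions with the
same source location and action are mutually exclusive. -/
def Deterministic {Act Loc Clock : Type*} (A : TimedAutomaton Act Loc Clock) : Prop :=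
  ∀ d₁ ∈ A.trans, ∀ d₂ ∈ A.trans, d₁.src = d₂.src → d₁.act = d₂.act → d₁ ≠ d₂ →
    ∀ ν : Clock → ℝ≥0, ¬ (d₁.guard ν ∧ d₂.guard ν)

/-- A timed automaton is complete iff for every location, action and clock valuation some
transition is enabled. -/
def Complete {Act Loc Clock : Type*} (A : TimedAutomaton Act Loc Clock) : Prop :=
  ∀ (l : Loc) (a : Act) (ν : Clock → ℝ≥0),
    ∃ d ∈ A.trans, d.src = l ∧ d.act = a ∧ d.guard ν
/-- Region equivalence of clock valuations with respect to a clock ceiling `κ`. -/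
def RegionEquiv {C : Type*} (κ : C → ℕ) (ν ν' : C → ℝ≥0) : Prop :=
  (∀ c : C, ⌊(ν c : ℝ)⌋ = ⌊(ν' c : ℝ)⌋ ∨ ((κ c : ℝ) < (ν c : ℝ) ∧ (κ c : ℝ) < (ν' c : ℝ))) ∧
  (∀ c : C, (ν c : ℝ) ≤ (κ c : ℝ) →
    (Int.fract (ν c : ℝ) = 0 ↔ Int.fract (ν' c : ℝ) = 0)) ∧
  (∀ ci cj : C, (ν ci : ℝ) ≤ (κ ci : ℝ) → (ν cj : ℝ) ≤ (κ cj : ℝ) →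
    (Int.fract (ν ci : ℝ) ≤ Int.fract (ν cj : ℝ) ↔
      Int.fract (ν' ci : ℝ) ≤ Int.fract (ν' cj : ℝ)))
/-- A run of `A` from state `(l, ν)` over a clocked word (each letter records the clock
valuation at the moment the action is taken), recording the list of transitions traversed
and the final location. -/
inductive CRun {Act Loc Clock : Type*} (A : TimedAutomaton Act Loc Clock) :
    Loc → (Clock → ℝ≥0) → List (Act × (Clock → ℝ≥0)) →
    List (TimedTransition Act Loc Clock) → Loc → Prop
  | nil (l : Loc) (ν : Clock → ℝ≥0) : CRun A l ν [] [] l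
  | cons (l : Loc) (ν : Clock → ℝ≥0) (a : Act) (v : Clock → ℝ≥0)
      (w : List (Act × (Clock → ℝ≥0))) (ds : List (TimedTransition Act Loc Clock))
      (lf : Loc) (t : ℝ≥0) (hv : ∀ c, v c = ν c + t)
      (d : TimedTransition Act Loc Clock) (hd : d ∈ A.trans)
      (hsrc : d.src = l) (hact : d.act = a) (hg : d.guard v)
      (hrest : CRun A d.tgt (resetVal d.resets v) w ds lf) :
      CRun A l ν ((a, v) :: w) (d :: ds) lf

theorem crun_aux {Act Loc Clock : Type*} [Fintype Clock]
    (A : TimedAutomaton Act Loc Clock) (κ : Clock → ℕ)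
    (hdet : Deterministic A)
    (hreg : ∀ d ∈ A.trans, ∀ ν ν' : Clock → ℝ≥0,
      RegionEquiv κ ν ν' → (d.guard ν ↔ d.guard ν')) :
    ∀ (γ γ' : List (Act × (Clock → ℝ≥0))),
      List.Forall₂ (fun p q : Act × (Clock → ℝ≥0) =>
        p.1 = q.1 ∧ RegionEquiv κ p.2 q.2) γ γ' →
      ∀ (l : Loc) (ν ν' : Clock → ℝ≥0) ds ds' (lf lf' : Loc),
        CRun A l ν γ ds lf → CRun A l ν' γ' ds' lf' → ds = ds' ∧ lf = lf' := by
  intro γ γ' hsame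
  induction hsame with
  | nil =>
    intro l ν ν' ds ds' lf lf' h1 h2
    cases h1; cases h2; exact ⟨rfl, rfl⟩
  | @cons p q γt γt' hpq htail ih =>
    intro l ν ν' ds ds' lf lf' h1 h2
    cases h1 with
    | cons _ _ a v w dtl lf t hv d hd hsrc hact hg hrest =>
    cases h2 with
    | cons _ _ a' v' w' dtl' lf' t' hv' d' hd' hsrc' hact' hg' hrest' =>
    obtain ⟨ha, hre⟩ := hpq
    simp only at ha hre
    have hdd : d = d' := by
      by_contra hne
      exact hdet d hd d' hd' (hsrc.trans hsrc'.symm)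
        (by rw [hact, hact', ha]) hne v'
        ⟨(hreg d hd v v' hre).mp hg, hg'⟩
    subst hdd
    obtain ⟨hds, hlf⟩ := ih _ _ _ _ _ _ _ hrest hrest'
    exact ⟨by rw [hds], hlf⟩

/-- For a complete deterministic timed automaton whose guards are unions of regions,
two valid clocked words with the same region word traverse the same sequence of
transitions; hence one is accepted iff the other is, and the sequences of reset
information along their runs are equal. -/
theorem same_region_word_same_transitions {Act Loc Clock : Type*} [Fintype Clock]
    (A : TimedAutomaton Act Loc Clock) (κ : Clock → ℕ)
    (hdet : Deterministic A) (hcomp : Complete A)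
    (hreg : ∀ d ∈ A.trans, ∀ ν ν' : Clock → ℝ≥0,
      RegionEquiv κ ν ν' → (d.guard ν ↔ d.guard ν'))
    (γ γ' : List (Act × (Clock → ℝ≥0)))
    (hsame : List.Forall₂ (fun p q : Act × (Clock → ℝ≥0) =>
      p.1 = q.1 ∧ RegionEquiv κ p.2 q.2) γ γ')
    (ds ds' : List (TimedTransition Act Loc Clock)) (lf lf' : Loc)
    (h₁ : CRun A A.init (fun _ => 0) γ ds lf)
    (h₂ : CRun A A.init (fun _ => 0) γ' ds' lf') :
    ds = ds' ∧ (lf ∈ A.accept ↔ lf' ∈ A.accept) ∧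
      ds.map (fun d => d.resets) = ds'.map (fun d => d.resets) := by
  obtain ⟨hds, hlf⟩ := crun_aux A κ hdet hreg γ γ' hsame A.init _ _ ds ds' lf lf' h₁ h₂
  subst hds; subst hlf
  exact ⟨rfl, Iff.rfl, rfl⟩
end

section
/- Given a complete deterministic timed automaton A, if two valid reset-clocked words γ_{r1} and γ_{r2} reach the same symbolic state (same location and same clock region), then they are equivalent under the relation ∼_{L_r(A)}: for every region word ξ and all valid successors γ'_{r1} ∈ vs(γ_{r1},ξ), γ'_{r2} ∈ vs(γ_{r2},ξ), we have γ_{r1}γ'_{r1} ∈ L_r(A) iff γ_{r2}γ'_{r2} ∈ L_r(A), and resets(γ'_{r1}) = resets(γ'_{r2}). -/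
open scoped NNReal

/-- A run of `A` from state `(l, ν)` realizing a reset-clocked word (each letter records
the action, the clock valuation at the moment the action is taken, and the set of clocks
reset by the transition taken), recording the final location and final clock valuation. -/
inductive RRun {Act Loc Clock : Type*} (A : TimedAutomaton Act Loc Clock) :
    Loc → (Clock → ℝ≥0) → List (Act × (Clock → ℝ≥0) × Set Clock) →
    Loc → (Clock → ℝ≥0) → Prop
  | nil (l : Loc) (ν : Clock → ℝ≥0) : RRun A l ν [] l ν
  | cons (l : Loc) (ν : Clock → ℝ≥0) (a : Act) (v : Clock → ℝ≥0) (B : Set Clock)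
      (w : List (Act × (Clock → ℝ≥0) × Set Clock)) (lf : Loc) (νf : Clock → ℝ≥0)
      (t : ℝ≥0) (hv : ∀ c, v c = ν c + t)
      (d : TimedTransition Act Loc Clock) (hd : d ∈ A.trans)
      (hsrc : d.src = l) (hact : d.act = a) (hg : d.guard v) (hres : d.resets = B)
      (hrest : RRun A d.tgt (resetVal B v) w lf νf) :
      RRun A l ν ((a, v, B) :: w) lf νf

/-- The reset-clocked language of `A`: reset-clocked words of accepting runs. -/
def ResetClockedLang {Act Loc Clock : Type*} (A : TimedAutomaton Act Loc Clock) :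
    Set (List (Act × (Clock → ℝ≥0) × Set Clock)) :=
  {γ | ∃ (lf : Loc) (νf : Clock → ℝ≥0),
    RRun A A.init (fun _ => 0) γ lf νf ∧ lf ∈ A.accept}

/-- A reset-clocked word is valid w.r.t. `A` iff some run of `A` realizes it. -/
def ValidWord {Act Loc Clock : Type*} (A : TimedAutomaton Act Loc Clock)
    (γ : List (Act × (Clock → ℝ≥0) × Set Clock)) : Prop :=
  ∃ (lf : Loc) (νf : Clock → ℝ≥0), RRun A A.init (fun _ => 0) γ lf νf

/-- The region word of the clocked part of the reset-clocked word `γ'` equals the region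
word `ξ` (a region word is represented by a word of representative valuations). -/
def MatchesRegionWord {Act Clock : Type*} (κ : Clock → ℕ)
    (γ' : List (Act × (Clock → ℝ≥0) × Set Clock))
    (ξ : List (Act × (Clock → ℝ≥0))) : Prop :=
  List.Forall₂ (fun (p : Act × (Clock → ℝ≥0) × Set Clock) (q : Act × (Clock → ℝ≥0)) =>
    p.1 = q.1 ∧ RegionEquiv κ p.2.1 q.2) γ' ξ

/-- The set `vs_A(γ_r, ξ)` of valid successors of `γ_r` corresponding to `ξ`. -/
def ValidSucc {Act Loc Clock : Type*} (A : TimedAutomaton Act Loc Clock)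
    (κ : Clock → ℕ) (γ : List (Act × (Clock → ℝ≥0) × Set Clock))
    (ξ : List (Act × (Clock → ℝ≥0))) :
    Set (List (Act × (Clock → ℝ≥0) × Set Clock)) :=
  {γ' | MatchesRegionWord κ γ' ξ ∧ ValidWord A (γ ++ γ')}

/-- The sequence of reset sets of a reset-clocked word. -/
def resetsOf {Act Clock : Type*} (γ : List (Act × (Clock → ℝ≥0) × Set Clock)) :
    List (Set Clock) :=
  γ.map (fun p => p.2.2)

/-- The equivalence relation `∼_{L_r(A)}` on reset-clocked words. -/
def REquiv {Act Loc Clock : Type*} (A : TimedAutomaton Act Loc Clock) (κ : Clock → ℕ)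
    (γ₁ γ₂ : List (Act × (Clock → ℝ≥0) × Set Clock)) : Prop :=
  ∀ (ξ : List (Act × (Clock → ℝ≥0)))
    (γ₁' γ₂' : List (Act × (Clock → ℝ≥0) × Set Clock)),
    γ₁' ∈ ValidSucc A κ γ₁ ξ → γ₂' ∈ ValidSucc A κ γ₂ ξ →
      ((γ₁ ++ γ₁' ∈ ResetClockedLang A ↔ γ₂ ++ γ₂' ∈ ResetClockedLang A) ∧
        resetsOf γ₁' = resetsOf γ₂')
/-- Runs over an appended word decompose. -/
theorem rrun_append_iff {Act Loc Clock : Type*} (A : TimedAutomaton Act Loc Clock)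
    (l : Loc) (ν : Clock → ℝ≥0) (γ γ' : List (Act × (Clock → ℝ≥0) × Set Clock))
    (lf : Loc) (νf : Clock → ℝ≥0) :
    RRun A l ν (γ ++ γ') lf νf ↔
      ∃ (lm : Loc) (νm : Clock → ℝ≥0), RRun A l ν γ lm νm ∧ RRun A lm νm γ' lf νf := by
  constructor
  · induction γ generalizing l ν with
    | nil => intro h; exact ⟨l, ν, RRun.nil l ν, h⟩
    | cons p w ih =>
      intro h
      cases h with
      | cons l ν a v B _ lf νf t hv d hd hsrc hact hg hres hrest =>
        obtain ⟨lm, νm, h1, h2⟩ := ih _ _ hrest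
        exact ⟨lm, νm, RRun.cons l ν a v B w lm νm t hv d hd hsrc hact hg hres h1, h2⟩
  · rintro ⟨lm, νm, h1, h2⟩
    induction h1 with
    | nil => exact h2
    | cons l ν a v B w lf νf t hv d hd hsrc hact hg hres hrest ih =>
      exact RRun.cons l ν a v B _ _ _ t hv d hd hsrc hact hg hres (ih h2)

/-- In a deterministic automaton, a run realizing a given reset-clocked word from a given
state is unique. -/
theorem rrun_unique {Act Loc Clock : Type*} {A : TimedAutomaton Act Loc Clock}
    (hdet : Deterministic A) :
    ∀ (γ : List (Act × (Clock → ℝ≥0) × Set Clock)) (l : Loc) (ν : Clock → ℝ≥0)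
      (lf νf lf' νf'),
      RRun A l ν γ lf νf → RRun A l ν γ lf' νf' → lf = lf' ∧ νf = νf' := by
  intro γ
  induction γ with
  | nil =>
    intro l ν lf νf lf' νf' h1 h2
    cases h1; cases h2; exact ⟨rfl, rfl⟩
  | cons p w ih =>
    intro l ν lf νf lf' νf' h1 h2
    cases h1 with
    | cons _ _ a v B _ _ _ t hv d hd hsrc hact hg hres hrest =>
      cases h2 with
      | cons _ _ _ _ _ _ _ _ t' hv' d' hd' hsrc' hact' hg' hres' hrest' =>
        have hdd : d = d' := by
          by_contra hne
          exact hdet d hd d' hd' (hsrc.trans hsrc'.symm) (hact.trans hact'.symm) hne v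
            ⟨hg, hg'⟩
        subst hdd
        exact ih _ _ _ _ _ _ hrest hrest'

/-- Two runs from the same location whose reset-clocked words match the same region word
reach the same final location and have the same reset sequence. -/
theorem rrun_match {Act Loc Clock : Type*} {A : TimedAutomaton Act Loc Clock}
    {κ : Clock → ℕ} (hdet : Deterministic A)
    (hreg : ∀ d ∈ A.trans, ∀ ν ν' : Clock → ℝ≥0,
      RegionEquiv κ ν ν' → (d.guard ν ↔ d.guard ν')) :
    ∀ (ξ : List (Act × (Clock → ℝ≥0)))
      (γ₁ γ₂ : List (Act × (Clock → ℝ≥0) × Set Clock)) (l : Loc)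
      (ν₁ ν₂ : Clock → ℝ≥0) (lf₁ : Loc) (νf₁ : Clock → ℝ≥0) (lf₂ : Loc)
      (νf₂ : Clock → ℝ≥0),
      MatchesRegionWord κ γ₁ ξ → MatchesRegionWord κ γ₂ ξ →
      RRun A l ν₁ γ₁ lf₁ νf₁ → RRun A l ν₂ γ₂ lf₂ νf₂ →
      lf₁ = lf₂ ∧ resetsOf γ₁ = resetsOf γ₂ := by
  intro ξ
  induction ξ with
  | nil =>
    intro γ₁ γ₂ l ν₁ ν₂ lf₁ νf₁ lf₂ νf₂ hm1 hm2 h1 h2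
    cases hm1; cases hm2
    cases h1; cases h2
    exact ⟨rfl, rfl⟩
  | cons q ξ' ih =>
    intro γ₁ γ₂ l ν₁ ν₂ lf₁ νf₁ lf₂ νf₂ hm1 hm2 h1 h2
    obtain ⟨p₁, w₁, ⟨ha1, hre1⟩, hw1, rfl⟩ := List.forall₂_cons_right_iff.mp hm1
    obtain ⟨p₂, w₂, ⟨ha2, hre2⟩, hw2, rfl⟩ := List.forall₂_cons_right_iff.mp hm2
    obtain ⟨a₁, v₁, B₁⟩ := p₁
    obtain ⟨a₂, v₂, B₂⟩ := p₂
    cases h1 with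
    | cons _ _ _ _ _ _ _ _ t₁ hv₁ d₁ hd₁ hsrc₁ hact₁ hg₁ hres₁ hrest₁ =>
      cases h2 with
      | cons _ _ _ _ _ _ _ _ t₂ hv₂ d₂ hd₂ hsrc₂ hact₂ hg₂ hres₂ hrest₂ =>
        have haa : a₁ = a₂ := by
          have := ha1.trans ha2.symm
          simpa using this
        -- d₁'s guard holds at v₂, via the region representative q.2
        have hgq : d₁.guard q.2 := (hreg d₁ hd₁ v₁ q.2 hre1).mp hg₁
        have hgv₂ : d₁.guard v₂ := (hreg d₁ hd₁ v₂ q.2 hre2).mpr hgq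
        have hdd : d₁ = d₂ := by
          by_contra hne
          exact hdet d₁ hd₁ d₂ hd₂ (hsrc₁.trans hsrc₂.symm)
            (hact₁.trans (haa.trans hact₂.symm)) hne v₂ ⟨hgv₂, hg₂⟩
        subst hdd
        have hBB : B₁ = B₂ := hres₁.symm.trans hres₂
        subst hBB
        obtain ⟨hlf, hres⟩ := ih w₁ w₂ d₁.tgt (resetVal B₁ v₁) (resetVal B₁ v₂)
          _ _ _ _ hw1 hw2 hrest₁ hrest₂
        refine ⟨hlf, ?_⟩
        simp only [resetsOf, List.map_cons]
        simp only [resetsOf] at hres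
        rw [hres]

/-- If two valid reset-clocked words of a complete deterministic timed automaton reach the
same symbolic state (same location and region-equivalent clock valuations), then they are
equivalent under `∼_{L_r(A)}`. -/
theorem same_symbolic_state_equiv {Act Loc Clock : Type*} [Fintype Clock]
    (A : TimedAutomaton Act Loc Clock) (κ : Clock → ℕ)
    (hdet : Deterministic A) (hcomp : Complete A)
    (hreg : ∀ d ∈ A.trans, ∀ ν ν' : Clock → ℝ≥0,
      RegionEquiv κ ν ν' → (d.guard ν ↔ d.guard ν'))
    (hkey : ∀ ν ν' : Clock → ℝ≥0, RegionEquiv κ ν ν' → ∀ t : ℝ≥0, ∃ t' : ℝ≥0,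
      RegionEquiv κ (fun c => ν c + t) (fun c => ν' c + t'))
    (γ₁ γ₂ : List (Act × (Clock → ℝ≥0) × Set Clock))
    (hsym : ∃ (l : Loc) (ν₁ ν₂ : Clock → ℝ≥0),
      RRun A A.init (fun _ => 0) γ₁ l ν₁ ∧ RRun A A.init (fun _ => 0) γ₂ l ν₂ ∧
      RegionEquiv κ ν₁ ν₂) :
    REquiv A κ γ₁ γ₂ := by
  obtain ⟨l, ν₁, ν₂, hr1, hr2, -⟩ := hsym
  intro ξ γ₁' γ₂' h1 h2
  obtain ⟨hm1, lf₁, νf₁, hv1⟩ := h1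
  obtain ⟨hm2, lf₂, νf₂, hv2⟩ := h2
  rw [rrun_append_iff] at hv1 hv2
  obtain ⟨lm1, νm1, ha1, hb1⟩ := hv1
  obtain ⟨lm2, νm2, ha2, hb2⟩ := hv2
  obtain ⟨e1, e1'⟩ := rrun_unique hdet γ₁ _ _ _ _ _ _ ha1 hr1
  obtain ⟨e2, e2'⟩ := rrun_unique hdet γ₂ _ _ _ _ _ _ ha2 hr2
  have hb1' : RRun A l ν₁ γ₁' lf₁ νf₁ := by rw [e1, e1'] at hb1; exact hb1
  have hb2' : RRun A l ν₂ γ₂' lf₂ νf₂ := by rw [e2, e2'] at hb2; exact hb2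
  obtain ⟨hlf, hres⟩ := rrun_match hdet hreg ξ γ₁' γ₂' l ν₁ ν₂ lf₁ νf₁ lf₂ νf₂
    hm1 hm2 hb1' hb2'
  refine ⟨?_, hres⟩
  constructor
  · rintro ⟨lf, νf, hr, hacc⟩
    rw [rrun_append_iff] at hr
    obtain ⟨lm, νm, hc1, hc2⟩ := hr
    obtain ⟨f1, f1'⟩ := rrun_unique hdet γ₁ _ _ _ _ _ _ hc1 hr1
    have hc2' : RRun A l ν₁ γ₁' lf νf := by rw [f1, f1'] at hc2; exact hc2
    obtain ⟨f2, -⟩ := rrun_unique hdet γ₁' _ _ _ _ _ _ hc2' hb1'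
    refine ⟨lf₂, νf₂, (rrun_append_iff A _ _ _ _ _ _).mpr ⟨l, ν₂, hr2, hb2'⟩, ?_⟩
    rw [← hlf, ← f2]; exact hacc
  · rintro ⟨lf, νf, hr, hacc⟩
    rw [rrun_append_iff] at hr
    obtain ⟨lm, νm, hc1, hc2⟩ := hr
    obtain ⟨f1, f1'⟩ := rrun_unique hdet γ₂ _ _ _ _ _ _ hc1 hr2
    have hc2' : RRun A l ν₂ γ₂' lf νf := by rw [f1, f1'] at hc2; exact hc2
    obtain ⟨f2, -⟩ := rrun_unique hdet γ₂' _ _ _ _ _ _ hc2' hb2'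
    refine ⟨lf₁, νf₁, (rrun_append_iff A _ _ _ _ _ _).mpr ⟨l, ν₁, hr1, hb1'⟩, ?_⟩
    rw [hlf, ← f2]; exact hacc
end
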